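/- Minimizing the average symmetrized Bregman divergence c ↦ (1/n)∑_{i=1}^n (D_F(p_i‖c) + D_F(c‖p_i))/2 over c ∈ X is equivalent to minimizing q ↦ D_F(c_R‖q) + D_F(q‖c_L), where c_R = (1/n)∑ p_i and c_L = (∇F)^{−1}((1/n)∑ ∇F(p_i)); i.e., the two objective functions differ by a constant independent of the variable. -/

import Mathlib

open scoped RealInnerProductSpace

/-- Bregman divergence of a generator `F` with gradient map `F'`. -/
noncomputable def bregman {d : ℕ}
    (F : EuclideanSpace ℝ (Fin d) → ℝ)
    (F' : EuclideanSpace ℝ (Fin d) → EuclideanSpace ℝ (Fin d))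
    (p q : EuclideanSpace ℝ (Fin d)) : ℝ :=
  F p - F q - ⟪p - q, F' q⟫

/-!
The `F`-values cancel in both objectives. On the left, `D(p,q) + D(q,p) = ⟪p - q, F' p - F' q⟫`,
and averaging over the `p i` leaves, up to a constant covariance term,
`⟪c_R - q, F' c_L - F' q⟫`, because `F' c_L` is the mean of the `F' (p i)`. On the right, the
three-point identity `D(c_R,q) + D(q,c_L) = D(c_R,c_L) + ⟪c_R - q, F' c_L - F' q⟫` produces the
same term.
-/

section Covariance

variable {E ι : Type*} [NormedAddCommGroup E] [InnerProductSpace ℝ E] [Fintype ι]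

theorem mean_inner_sub_sub [Nonempty ι] (x y : ι → E) (a b : E) :
    (Fintype.card ι : ℝ)⁻¹ * ∑ i, ⟪x i - a, y i - b⟫ =
      (Fintype.card ι : ℝ)⁻¹ * ∑ i, ⟪x i, y i⟫
        - ⟪(Fintype.card ι : ℝ)⁻¹ • ∑ i, x i, (Fintype.card ι : ℝ)⁻¹ • ∑ i, y i⟫
        + ⟪(Fintype.card ι : ℝ)⁻¹ • ∑ i, x i - a, (Fintype.card ι : ℝ)⁻¹ • ∑ i, y i - b⟫ := by
  have hcard : (Fintype.card ι : ℝ) ≠ 0 := Nat.cast_ne_zero.mpr Fintype.card_ne_zero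
  simp only [inner_sub_left, inner_sub_right, real_inner_smul_left, real_inner_smul_right,
    sum_inner, inner_sum, Finset.sum_sub_distrib, Finset.sum_const, Finset.card_univ,
    nsmul_eq_mul]
  field_simp
  ring

end Covariance

section Bregman

variable {d : ℕ} (F : EuclideanSpace ℝ (Fin d) → ℝ)
  (F' : EuclideanSpace ℝ (Fin d) → EuclideanSpace ℝ (Fin d))

theorem bregman_add_bregman_swap (p q : EuclideanSpace ℝ (Fin d)) :
    bregman F F' p q + bregman F F' q p = ⟪p - q, F' p - F' q⟫ := by
  simp only [bregman, inner_sub_left, inner_sub_right]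
  ring

theorem bregman_three_point (a b c : EuclideanSpace ℝ (Fin d)) :
    bregman F F' a b + bregman F F' b c = bregman F F' a c + ⟪a - b, F' c - F' b⟫ := by
  simp only [bregman, inner_sub_left, inner_sub_right]
  ring

end Bregman

theorem symmetrized_objective_reduction_general {d n : ℕ} (hn : 0 < n)
    {X : Set (EuclideanSpace ℝ (Fin d))}
    {F : EuclideanSpace ℝ (Fin d) → ℝ}
    {F' : EuclideanSpace ℝ (Fin d) → EuclideanSpace ℝ (Fin d)}
    (p : Fin n → EuclideanSpace ℝ (Fin d))
    (cR : EuclideanSpace ℝ (Fin d)) (hcR : cR = (n : ℝ)⁻¹ • ∑ i, p i)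
    (cL : EuclideanSpace ℝ (Fin d))
    (hcLmean : F' cL = (n : ℝ)⁻¹ • ∑ i, F' (p i)) :
    ∃ K : ℝ, ∀ q ∈ X,
      (n : ℝ)⁻¹ * ∑ i, (bregman F F' (p i) q + bregman F F' q (p i)) / 2 =
        (bregman F F' cR q + bregman F F' q cL) / 2 + K := by
  have : Nonempty (Fin n) := ⟨⟨0, hn⟩⟩
  refine ⟨((n : ℝ)⁻¹ * ∑ i, ⟪p i, F' (p i)⟫ - ⟪cR, F' cL⟫ - bregman F F' cR cL) / 2,
    fun q _ => ?_⟩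
  have hmean := mean_inner_sub_sub p (fun i => F' (p i)) q (F' q)
  simp only [Fintype.card_fin, ← hcR, ← hcLmean] at hmean
  rw [← Finset.sum_div, ← mul_div_assoc, bregman_three_point]
  simp only [bregman_add_bregman_swap, hmean]
  ring

/-- Minimizing the average symmetrized Bregman divergence is equivalent to minimizing
`q ↦ D_F(c_R‖q) + D_F(q‖c_L)`: the two objectives agree up to a constant
(and a fixed positive factor 1/2). -/
theorem symmetrized_objective_reduction {d n : ℕ} (hn : 0 < n)
    {X : Set (EuclideanSpace ℝ (Fin d))} (hXopen : IsOpen X) (hXconv : Convex ℝ X)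
    {F : EuclideanSpace ℝ (Fin d) → ℝ}
    {F' : EuclideanSpace ℝ (Fin d) → EuclideanSpace ℝ (Fin d)}
    (hF : StrictConvexOn ℝ X F)
    (hF' : ∀ x ∈ X, HasGradientAt F (F' x) x)
    (p : Fin n → EuclideanSpace ℝ (Fin d)) (hp : ∀ i, p i ∈ X)
    (cR : EuclideanSpace ℝ (Fin d)) (hcR : cR = (n : ℝ)⁻¹ • ∑ i, p i)
    (cL : EuclideanSpace ℝ (Fin d)) (hcL : cL ∈ X)
    (hcLmean : F' cL = (n : ℝ)⁻¹ • ∑ i, F' (p i)) :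
    ∃ K : ℝ, ∀ q ∈ X,
      (n : ℝ)⁻¹ * ∑ i, (bregman F F' (p i) q + bregman F F' q (p i)) / 2 =
        (bregman F F' cR q + bregman F F' q cL) / 2 + K :=
  symmetrized_objective_reduction_general hn p cR hcR cL hcLmean
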